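/- Let m be an odd positive integer. For every C ∈ R, the number of quadruples (X,Y,Z,W) ∈ 𝒯⁴ with X + Y + Z − W = C equals 2^{2m} if C ∈ 2R; equals (2^m + 1)·2^m if C ∉ 2R but C ∈ 𝒯 + 𝒯 (i.e., C = X′ + Y′ for some X′, Y′ ∈ 𝒯); and equals (2^m − 1)·2^m if C ∉ 𝒯 + 𝒯. -/

import Mathlib

open Polynomial
open scoped Classical

/-!
Let `S = R/2R` and `q = |S|`. Every element of `R` is `u² + 2v` for a unique pair of residues
`(ū, v̄) ∈ S × S`, and the Teichmüller set is exactly the set of squares `x²`. Since `4 = 0`,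
`x² + y² + z² - w² = (x + y + z + w)² + 2 (e₂(x, y, z, w) + w²)`, so for `C = u² + 2v` with
`ū = σ`, `v̄ = γ` the equation `x² + y² + z² - w² = C` says `a + b + c + d = σ` and
`e₂(a, b, c, d) + d² = γ` for the residues `a, b, c, d` of `x, y, z, w`. Eliminating `d`, the
second equation is linear in `c` with coefficient `a + b + σ`, and counting gives `q² - q + q N`,
where `N` is the number of roots of `x² + σ x + γ`: `N = 1` if `σ = 0`, i.e. `C ∈ 2R`, and
otherwise `N` is `2` or `0` according as `C` is or is not a sum of two Teichmüller elements.
-/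

section Counting

variable {S : Type*} [Field S] [Fintype S]

theorem natCard_mul_eq (A B : S) :
    Nat.card {c : S // c * A = B} =
      if A = 0 then (if B = 0 then Fintype.card S else 0) else 1 := by
  split_ifs with hA hB
  · subst hA hB
    simp [Nat.card_eq_fintype_card]
  · subst hA
    simp [eq_comm, hB]
  · exact Nat.card_eq_one_iff_exists.2
      ⟨⟨B / A, div_mul_cancel₀ B hA⟩, fun c => Subtype.ext (eq_div_of_mul_eq hA c.2)⟩

namespace CharTwo

variable [CharP S 2]

theorem sum_natCard_mul_add_add_eq (σ γ a : S) :
    ∑ b : S, Nat.card {c : S // c * (a + b + σ) = γ + a * b + σ * (a + b) + σ ^ 2} =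
      (if a * (a + σ) = γ then Fintype.card S else 0) + (Fintype.card S - 1) := by
  rw [Fintype.sum_eq_add_sum_compl (a + σ)]
  congr 1
  · rw [natCard_mul_eq, if_pos (by ring_nf; reduce_mod_char!)]
    congr 1
    apply propext
    constructor <;> intro h <;> linear_combination (norm := ring_nf) h <;> reduce_mod_char!
  · rw [Finset.sum_congr rfl (g := fun _ => 1), Finset.sum_const, smul_eq_mul, mul_one,
      Finset.card_compl, Finset.card_singleton]
    intro b hb
    rw [natCard_mul_eq, if_neg]
    refine fun h => Finset.mem_compl.1 hb (Finset.mem_singleton.2 ?_)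
    linear_combination (norm := ring_nf) h
    reduce_mod_char!

theorem natCard_quadruples (σ γ : S) :
    Nat.card {u : S × S × S × S // u.1 + u.2.1 + u.2.2.1 + u.2.2.2 = σ ∧
        u.1 * u.2.1 + u.1 * u.2.2.1 + u.1 * u.2.2.2 + u.2.1 * u.2.2.1 + u.2.1 * u.2.2.2 +
          u.2.2.1 * u.2.2.2 + u.2.2.2 ^ 2 = γ} =
      Fintype.card S ^ 2 - Fintype.card S +
        Fintype.card S * Nat.card {x : S // x * (x + σ) = γ} := by
  let e : {u : S × S × S × S // u.1 + u.2.1 + u.2.2.1 + u.2.2.2 = σ ∧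
        u.1 * u.2.1 + u.1 * u.2.2.1 + u.1 * u.2.2.2 + u.2.1 * u.2.2.1 + u.2.1 * u.2.2.2 +
          u.2.2.1 * u.2.2.2 + u.2.2.2 ^ 2 = γ} ≃
      Σ a b : S, {c : S // c * (a + b + σ) = γ + a * b + σ * (a + b) + σ ^ 2} :=
    { toFun := fun ⟨(a, b, c, d), hs, he⟩ => ⟨a, b, c, by
        obtain rfl : d = σ + a + b + c := by
          linear_combination (norm := ring_nf) hs; reduce_mod_char!
        linear_combination (norm := ring_nf) he; reduce_mod_char!⟩
      invFun := fun ⟨a, b, c, hc⟩ => ⟨(a, b, c, σ + a + b + c), by ring_nf; reduce_mod_char!,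
        by linear_combination (norm := ring_nf) hc; reduce_mod_char!⟩
      left_inv := fun ⟨(a, b, c, d), hs, he⟩ => by
        obtain rfl : d = σ + a + b + c := by
          linear_combination (norm := ring_nf) hs; reduce_mod_char!
        rfl
      right_inv := fun _ => rfl }
  rw [Nat.card_congr e, Nat.card_sigma]
  simp only [Nat.card_sigma, sum_natCard_mul_add_add_eq]
  rw [Finset.sum_add_distrib, Finset.sum_ite, Finset.sum_const_zero, add_zero, Finset.sum_const,
    Finset.sum_const, smul_eq_mul, smul_eq_mul, Finset.card_univ, Nat.card_eq_fintype_card,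
    Fintype.card_subtype, Nat.mul_sub_one, sq]
  ring

theorem natCard_mul_add_eq (σ γ : S) :
    Nat.card {x : S // x * (x + σ) = γ} =
      if σ = 0 then 1 else if ∃ a b, a + b = σ ∧ a * b = γ then 2 else 0 := by
  split_ifs with hσ hab
  · subst hσ
    obtain ⟨r, hr⟩ := Finite.injective_iff_surjective.1 CharTwo.sq_injective γ
    refine Nat.card_eq_one_iff_exists.2 ⟨⟨r, by simpa [sq] using hr⟩, fun x => ?_⟩
    exact Subtype.ext (CharTwo.sq_injective (by simpa [hr, sq] using x.2))
  · obtain ⟨a, b, rfl, rfl⟩ := hab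
    have hroots : ∀ x, x * (x + (a + b)) = a * b ↔ x ∈ ({a, b} : Set S) := fun x => by
      rw [Set.mem_insert_iff, Set.mem_singleton_iff, ← sub_eq_zero (b := a),
        ← sub_eq_zero (b := b), ← mul_eq_zero]
      constructor <;> intro h <;> linear_combination (norm := ring_nf) h <;> reduce_mod_char!
    have hab : a ≠ b := fun h => hσ (by rw [h, CharTwo.add_self_eq_zero])
    rw [Nat.card_congr (Equiv.subtypeEquivRight hroots), Nat.card_coe_set_eq, Set.ncard_pair hab]
  · have : IsEmpty {x : S // x * (x + σ) = γ} :=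
      ⟨fun x => hab ⟨x, x + σ, by ring_nf; reduce_mod_char!, x.2⟩⟩
    exact Nat.card_of_isEmpty

end CharTwo

end Counting

/-- `π` is reduction modulo `2R` for a ring `R` of characteristic `4` in which `2R` is both the
kernel of `π` and the annihilator of `2`, as for the Galois ring `GR(4, m)` over `𝔽_{2^m}`. -/
structure IsResidueMapMod4 {R S : Type*} [CommRing R] [Field S] (π : R →+* S) : Prop where
  surjective : Function.Surjective π
  four_eq_zero : (4 : R) = 0
  map_eq_zero_iff (a : R) : π a = 0 ↔ ∃ x, a = 2 * x
  map_eq_zero_of_two_mul_eq_zero (a : R) : 2 * a = 0 → π a = 0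

namespace IsResidueMapMod4

variable {R S : Type*} [CommRing R] [Field S] {π : R →+* S}

theorem two_eq_zero (h : IsResidueMapMod4 π) : (2 : S) = 0 := by
  simpa only [map_ofNat] using (h.map_eq_zero_iff 2).2 ⟨1, (mul_one 2).symm⟩

theorem charP (h : IsResidueMapMod4 π) : CharP S 2 :=
  CharTwo.of_one_ne_zero_of_two_eq_zero one_ne_zero h.two_eq_zero

theorem map_eq_map_iff (h : IsResidueMapMod4 π) {a b : R} : π a = π b ↔ 2 * a = 2 * b := by
  constructor
  · intro hab
    obtain ⟨x, hx⟩ := (h.map_eq_zero_iff (a - b)).1 (by rw [map_sub, hab, sub_self])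
    linear_combination 2 * hx + x * h.four_eq_zero
  · intro hab
    rw [← sub_eq_zero, ← map_sub]
    exact h.map_eq_zero_of_two_mul_eq_zero _ (by linear_combination hab)

theorem sq_eq_sq_of_map_eq (h : IsResidueMapMod4 π) {a b : R} (hab : π a = π b) :
    a ^ 2 = b ^ 2 := by
  obtain ⟨x, hx⟩ := (h.map_eq_zero_iff (a - b)).1 (by rw [map_sub, hab, sub_self])
  linear_combination (a + b + 2 * x) * hx + x * (b + x) * h.four_eq_zero

noncomputable def lift (h : IsResidueMapMod4 π) : S → R := Function.surjInv h.surjective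

theorem map_lift (h : IsResidueMapMod4 π) (a : S) : π (h.lift a) = a :=
  Function.surjInv_eq h.surjective a

/-- Independent of the chosen lift; this is the Teichmüller representative of `a ^ 2`. -/
noncomputable def sqLift (h : IsResidueMapMod4 π) (a : S) : R := h.lift a ^ 2

theorem sqLift_map (h : IsResidueMapMod4 π) (x : R) : h.sqLift (π x) = x ^ 2 :=
  h.sq_eq_sq_of_map_eq (h.map_lift _)

theorem two_mul_lift_map (h : IsResidueMapMod4 π) (x : R) : 2 * h.lift (π x) = 2 * x :=
  h.map_eq_map_iff.1 (h.map_lift _)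

theorem map_sqLift (h : IsResidueMapMod4 π) (a : S) : π (h.sqLift a) = a ^ 2 := by
  rw [sqLift, map_pow, map_lift]

theorem sqLift_injective (h : IsResidueMapMod4 π) : Function.Injective h.sqLift := by
  have := h.charP
  intro a b hab
  apply CharTwo.sq_injective
  simpa only [map_sqLift] using congrArg π hab

theorem sqLift_add_two_mul_lift_inj (h : IsResidueMapMod4 π) {a b a' b' : S} :
    h.sqLift a + 2 * h.lift b = h.sqLift a' + 2 * h.lift b' ↔ a = a' ∧ b = b' := by
  have := h.charP
  constructor
  · intro e
    have ha : a = a' := CharTwo.sq_injective <| by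
      simpa [map_sqLift, map_ofNat, h.two_eq_zero] using congrArg π e
    subst ha
    exact ⟨rfl, by simpa only [map_lift] using h.map_eq_map_iff.2 (add_left_cancel e)⟩
  · rintro ⟨rfl, rfl⟩
    rfl

theorem exists_eq_sqLift_add_two_mul_lift [Finite S] (h : IsResidueMapMod4 π) (c : R) :
    ∃ a b, c = h.sqLift a + 2 * h.lift b := by
  have := h.charP
  obtain ⟨a, ha⟩ := Finite.injective_iff_surjective.1 CharTwo.sq_injective (π c)
  obtain ⟨x, hx⟩ := (h.map_eq_zero_iff (c - h.sqLift a)).1 <| by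
    rw [map_sub, map_sqLift, ← ha, sub_self]
  exact ⟨a, π x, by rw [two_mul_lift_map]; linear_combination hx⟩

theorem sqLift_add_sqLift (h : IsResidueMapMod4 π) (a b : S) :
    h.sqLift a + h.sqLift b = h.sqLift (a + b) + 2 * h.lift (a * b) := by
  obtain ⟨x, rfl⟩ := h.surjective a
  obtain ⟨y, rfl⟩ := h.surjective b
  rw [← map_add, ← map_mul, sqLift_map, sqLift_map, sqLift_map, two_mul_lift_map]
  linear_combination (-(x * y)) * h.four_eq_zero

theorem sqLift_add_add_sub (h : IsResidueMapMod4 π) (a b c d : S) :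
    h.sqLift a + h.sqLift b + h.sqLift c - h.sqLift d =
      h.sqLift (a + b + c + d) +
        2 * h.lift (a * b + a * c + a * d + b * c + b * d + c * d + d ^ 2) := by
  obtain ⟨x, rfl⟩ := h.surjective a
  obtain ⟨y, rfl⟩ := h.surjective b
  obtain ⟨z, rfl⟩ := h.surjective c
  obtain ⟨w, rfl⟩ := h.surjective d
  simp only [← map_add, ← map_mul, ← map_pow, sqLift_map, two_mul_lift_map]
  linear_combination (-(x * y + x * z + x * w + y * z + y * w + z * w + w ^ 2)) * h.four_eq_zero

theorem exists_eq_two_mul_iff (h : IsResidueMapMod4 π) (σ γ : S) :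
    (∃ x, h.sqLift σ + 2 * h.lift γ = 2 * x) ↔ σ = 0 := by
  rw [← h.map_eq_zero_iff, map_add, map_sqLift, map_mul, map_ofNat, h.two_eq_zero, zero_mul,
    add_zero, pow_eq_zero_iff two_ne_zero]

variable [Fintype S]

theorem sq_pow_card (h : IsResidueMapMod4 π) (r : R) : (r ^ 2) ^ Fintype.card S = r ^ 2 := by
  rw [← pow_mul, mul_comm, pow_mul]
  exact h.sq_eq_sq_of_map_eq (by rw [map_pow, FiniteField.pow_card])

theorem pow_card_eq_self_iff (h : IsResidueMapMod4 π) {X : R} :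
    X ^ Fintype.card S = X ↔ ∃ a, h.sqLift a = X := by
  constructor
  · intro hX
    have := h.charP
    obtain ⟨k, hk⟩ : Even (Fintype.card S) :=
      Nat.even_iff.2 (FiniteField.even_card_of_char_two (ringChar.eq S 2))
    exact ⟨π (X ^ k), by rw [sqLift_map, ← pow_mul, mul_two, ← hk, hX]⟩
  · rintro ⟨a, rfl⟩
    exact h.sq_pow_card _

theorem exists_teichmuller_add_eq_iff (h : IsResidueMapMod4 π) (σ γ : S) :
    (∃ X Y : R, X ^ Fintype.card S = X ∧ Y ^ Fintype.card S = Y ∧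
      h.sqLift σ + 2 * h.lift γ = X + Y) ↔ ∃ a b, a + b = σ ∧ a * b = γ := by
  simp only [h.pow_card_eq_self_iff]
  constructor
  · rintro ⟨_, _, ⟨a, rfl⟩, ⟨b, rfl⟩, e⟩
    rw [sqLift_add_sqLift, sqLift_add_two_mul_lift_inj] at e
    exact ⟨a, b, e.1.symm, e.2.symm⟩
  · rintro ⟨a, b, rfl, rfl⟩
    exact ⟨_, _, ⟨a, rfl⟩, ⟨b, rfl⟩, (h.sqLift_add_sqLift a b).symm⟩

theorem card_teichmuller_quadruples (h : IsResidueMapMod4 π) (C : R) :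
    Nat.card {t : R × R × R × R // t.1 ^ Fintype.card S = t.1 ∧
        t.2.1 ^ Fintype.card S = t.2.1 ∧ t.2.2.1 ^ Fintype.card S = t.2.2.1 ∧
        t.2.2.2 ^ Fintype.card S = t.2.2.2 ∧
        t.1 + t.2.1 + t.2.2.1 - t.2.2.2 = C} =
      Nat.card {u : S × S × S × S //
        h.sqLift u.1 + h.sqLift u.2.1 + h.sqLift u.2.2.1 - h.sqLift u.2.2.2 = C} := by
  refine (Nat.card_congr (Equiv.ofBijective
    (fun u => ⟨(h.sqLift u.1.1, h.sqLift u.1.2.1, h.sqLift u.1.2.2.1, h.sqLift u.1.2.2.2),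
      h.sq_pow_card _, h.sq_pow_card _, h.sq_pow_card _, h.sq_pow_card _, u.2⟩)
    ⟨?_, ?_⟩)).symm
  · rintro ⟨⟨a, b, c, d⟩, _⟩ ⟨⟨a', b', c', d'⟩, _⟩ e
    simp only [Subtype.mk.injEq, Prod.mk.injEq, h.sqLift_injective.eq_iff] at e
    obtain ⟨rfl, rfl, rfl, rfl⟩ := e
    rfl
  · rintro ⟨⟨X, Y, Z, W⟩, hX, hY, hZ, hW, hC⟩
    obtain ⟨a, rfl⟩ := h.pow_card_eq_self_iff.1 hX
    obtain ⟨b, rfl⟩ := h.pow_card_eq_self_iff.1 hY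
    obtain ⟨c, rfl⟩ := h.pow_card_eq_self_iff.1 hZ
    obtain ⟨d, rfl⟩ := h.pow_card_eq_self_iff.1 hW
    exact ⟨⟨(a, b, c, d), hC⟩, rfl⟩

theorem card_teichmuller_add_add_sub_eq (h : IsResidueMapMod4 π) (C : R) :
    Nat.card {t : R × R × R × R // t.1 ^ Fintype.card S = t.1 ∧
        t.2.1 ^ Fintype.card S = t.2.1 ∧ t.2.2.1 ^ Fintype.card S = t.2.2.1 ∧
        t.2.2.2 ^ Fintype.card S = t.2.2.2 ∧
        t.1 + t.2.1 + t.2.2.1 - t.2.2.2 = C} =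
      if ∃ x, C = 2 * x then Fintype.card S ^ 2
      else if ∃ X Y : R, X ^ Fintype.card S = X ∧ Y ^ Fintype.card S = Y ∧ C = X + Y then
        (Fintype.card S + 1) * Fintype.card S
      else (Fintype.card S - 1) * Fintype.card S := by
  have := h.charP
  obtain ⟨σ, γ, rfl⟩ := h.exists_eq_sqLift_add_two_mul_lift C
  simp only [h.card_teichmuller_quadruples, h.sqLift_add_add_sub, h.sqLift_add_two_mul_lift_inj,
    CharTwo.natCard_quadruples, CharTwo.natCard_mul_add_eq, h.exists_eq_two_mul_iff,
    h.exists_teichmuller_add_eq_iff]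
  obtain ⟨k, hk⟩ := Nat.exists_eq_add_one_of_ne_zero (Fintype.card_ne_zero (α := S))
  rw [hk, sq, ← Nat.sub_one_mul, Nat.add_sub_cancel]
  split_ifs <;> ring

end IsResidueMapMod4

local notation "ρ" => ZMod.castHom (show (2 : ℕ) ∣ 4 by norm_num) (ZMod 2)

theorem ZMod.ker_castHom_four_two : RingHom.ker ρ = Ideal.span {2} := by
  ext c
  rw [RingHom.mem_ker, Ideal.mem_span_singleton']
  revert c
  decide

theorem ZMod.two_mul_eq_zero_iff_castHom_eq_zero (c : ZMod 4) : 2 * c = 0 ↔ ρ c = 0 := by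
  revert c
  decide

namespace Polynomial

theorem map_castHom_four_two_eq_zero_iff (p : (ZMod 4)[X]) : p.map ρ = 0 ↔ ∃ r, p = 2 * r := by
  rw [← coe_mapRingHom, ← RingHom.mem_ker, ker_mapRingHom, ZMod.ker_castHom_four_two,
    Ideal.map_span, Set.image_singleton, Ideal.mem_span_singleton', map_ofNat]
  simp only [eq_comm, mul_comm]

theorem two_mul_eq_zero_iff_map_castHom_eq_zero (p : (ZMod 4)[X]) : 2 * p = 0 ↔ p.map ρ = 0 := by
  simp only [Polynomial.ext_iff, coeff_ofNat_mul, coeff_map, coeff_zero,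
    ZMod.two_mul_eq_zero_iff_castHom_eq_zero]

end Polynomial

namespace AdjoinRoot

variable {f : (ZMod 4)[X]}

theorem mk_eq_zero_iff_of_degree_lt {R : Type*} [CommRing R] {g p : R[X]} (hg : g.Monic)
    (hp : p.degree < g.degree) : mk g p = 0 ↔ p = 0 := by
  rw [mk_eq_zero]
  exact ⟨fun hd => by_contra fun h0 => hg.not_dvd_of_degree_lt h0 hp hd,
    by rintro rfl; exact dvd_zero _⟩

theorem exists_mk_eq_degree_lt {R : Type*} [CommRing R] [Nontrivial R] {g : R[X]} (hg : g.Monic)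
    (a : AdjoinRoot g) : ∃ p : R[X], p.degree < g.degree ∧ mk g p = a :=
  ⟨modByMonicHom hg a, by
    obtain ⟨p, rfl⟩ := mk_surjective a
    rw [modByMonicHom_mk]; exact degree_modByMonic_lt p hg, mk_leftInverse hg a⟩

noncomputable def residueMap (f : (ZMod 4)[X]) : AdjoinRoot f →+* AdjoinRoot (f.map ρ) :=
  AdjoinRoot.map ρ f (f.map ρ) dvd_rfl

theorem residueMap_mk (p : (ZMod 4)[X]) : residueMap f (mk f p) = mk (f.map ρ) (p.map ρ) := by
  rw [residueMap, AdjoinRoot.map, lift_mk, ← aeval_eq, aeval_def, algebraMap_eq, eval₂_map]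

theorem residueMap_surjective : Function.Surjective (residueMap f) := by
  intro s
  obtain ⟨q, rfl⟩ := mk_surjective s
  obtain ⟨p, rfl⟩ := map_surjective ρ (ZMod.ringHom_surjective ρ) q
  exact ⟨mk f p, residueMap_mk p⟩

theorem two_eq_zero_of_zmod_two (g : (ZMod 2)[X]) : (2 : AdjoinRoot g) = 0 := by
  rw [← map_ofNat (of g) 2, show (2 : ZMod 2) = 0 from rfl, map_zero]

theorem four_eq_zero_of_zmod_four (g : (ZMod 4)[X]) : (4 : AdjoinRoot g) = 0 := by
  rw [← map_ofNat (of g) 4, show (4 : ZMod 4) = 0 from rfl, map_zero]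

theorem residueMap_eq_zero_iff (hf : f.Monic) (a : AdjoinRoot f) :
    residueMap f a = 0 ↔ ∃ x, a = 2 * x := by
  have : Fact (1 < 4) := ⟨by norm_num⟩
  refine ⟨fun ha => ?_, ?_⟩
  · obtain ⟨p, hp, rfl⟩ := exists_mk_eq_degree_lt hf a
    have hp' : (p.map ρ).degree < (f.map ρ).degree :=
      (degree_map_le).trans_lt (hf.degree_map ρ ▸ hp)
    rw [residueMap_mk, mk_eq_zero_iff_of_degree_lt (hf.map ρ) hp',
      map_castHom_four_two_eq_zero_iff] at ha
    obtain ⟨r, rfl⟩ := ha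
    exact ⟨mk f r, by rw [map_mul, map_ofNat]⟩
  · rintro ⟨x, rfl⟩
    rw [map_mul, map_ofNat, two_eq_zero_of_zmod_two, zero_mul]

theorem residueMap_eq_zero_of_two_mul_eq_zero (hf : f.Monic) (a : AdjoinRoot f)
    (ha : 2 * a = 0) : residueMap f a = 0 := by
  have : Fact (1 < 4) := ⟨by norm_num⟩
  obtain ⟨p, hp, rfl⟩ := exists_mk_eq_degree_lt hf a
  have hp' : (2 * p).degree < f.degree :=
    two_mul p ▸ (degree_add_le p p).trans_lt (by rwa [max_self])
  rw [← map_ofNat (mk f) 2, ← map_mul, mk_eq_zero_iff_of_degree_lt hf hp',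
    two_mul_eq_zero_iff_map_castHom_eq_zero] at ha
  rw [residueMap_mk, ha, map_zero]

theorem natCard_eq_two_pow_natDegree (hf : f.Monic) :
    Nat.card (AdjoinRoot (f.map ρ)) = 2 ^ f.natDegree := by
  have := (hf.map ρ).finite_adjoinRoot
  rw [Module.natCard_eq_pow_finrank (K := ZMod 2), (powerBasis' (hf.map ρ)).finrank,
    Nat.card_zmod, powerBasis'_dim, hf.natDegree_map]

theorem isResidueMapMod4_residueMap (hf : f.Monic) [Fact (Irreducible (f.map ρ))] :
    IsResidueMapMod4 (residueMap f) where
  surjective := residueMap_surjective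
  four_eq_zero := four_eq_zero_of_zmod_four f
  map_eq_zero_iff := residueMap_eq_zero_iff hf
  map_eq_zero_of_two_mul_eq_zero := residueMap_eq_zero_of_two_mul_eq_zero hf

end AdjoinRoot

/-- With `R = GR(4,m)` realized as `(ℤ/4ℤ)[x]/(f)` and
`𝒯 = {z : z ^ 2^m = z}` the Teichmüller set (`m` odd), for every `C ∈ R` the number of
quadruples `(X,Y,Z,W) ∈ 𝒯⁴` with `X + Y + Z - W = C` equals `2^(2m)` if `C ∈ 2R`,
`(2^m + 1)·2^m` if `C ∉ 2R` but `C ∈ 𝒯 + 𝒯`, and `(2^m - 1)·2^m` if `C ∉ 𝒯 + 𝒯`. -/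
theorem statement8 (m : ℕ)
    (f : Polynomial (ZMod 4)) (hmonic : f.Monic) (hdeg : f.natDegree = m)
    (hirr : Irreducible (f.map (ZMod.castHom (show (2:ℕ) ∣ 4 by norm_num) (ZMod 2))))
    (C : AdjoinRoot f) :
    Nat.card {t : AdjoinRoot f × AdjoinRoot f × AdjoinRoot f × AdjoinRoot f //
        t.1 ^ 2 ^ m = t.1 ∧ t.2.1 ^ 2 ^ m = t.2.1 ∧ t.2.2.1 ^ 2 ^ m = t.2.2.1 ∧
        t.2.2.2 ^ 2 ^ m = t.2.2.2 ∧
        t.1 + t.2.1 + t.2.2.1 - t.2.2.2 = C} =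
      if ∃ x : AdjoinRoot f, C = 2 * x then 2 ^ (2 * m)
      else if ∃ X Y : AdjoinRoot f, X ^ 2 ^ m = X ∧ Y ^ 2 ^ m = Y ∧ C = X + Y then
        (2 ^ m + 1) * 2 ^ m
      else (2 ^ m - 1) * 2 ^ m := by
  have : Fact (Irreducible (f.map ρ)) := ⟨hirr⟩
  have hcard := AdjoinRoot.natCard_eq_two_pow_natDegree hmonic
  have : Finite (AdjoinRoot (f.map ρ)) := Nat.finite_of_card_ne_zero (by rw [hcard]; positivity)
  let _ := Fintype.ofFinite (AdjoinRoot (f.map ρ))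
  have hq : Fintype.card (AdjoinRoot (f.map ρ)) = 2 ^ m := by
    rw [Fintype.card_eq_nat_card, hcard, hdeg]
  rw [pow_mul', ← hq]
  exact (AdjoinRoot.isResidueMapMod4_residueMap hmonic).card_teichmuller_add_add_sub_eq C
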